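/- Let $a, b : \mathbb{N} \times \mathbb{N} \to \mathbb{C}$ be two double sequences such that for every prime $p \geq 5$ and every $k \in \mathbb{N}$, $\sum_{(m,n) : m + pn = k} a_{m,n} = \sum_{(m,n) : m + pn = k} b_{m,n}$. Then $a_{m,n} = b_{m,n}$ for all $m, n \in \mathbb{N}$. -/
import Mathlib


/-- If two double sequences `a b : ℕ × ℕ → ℂ` satisfy, for every prime
`p ≥ 5` and every `k`, `∑_{m + p n = k} a (m,n) = ∑_{m + p n = k} b (m,n)`,
then `a = b`. -/
theorem optimal_form_uniqueness (a b : ℕ × ℕ → ℂ)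
    (h : ∀ p : ℕ, p.Prime → 5 ≤ p → ∀ k : ℕ,
      ∑ mn ∈ (Finset.range (k + 1) ×ˢ Finset.range (k + 1)).filter
        (fun mn => mn.1 + p * mn.2 = k), a mn
      = ∑ mn ∈ (Finset.range (k + 1) ×ˢ Finset.range (k + 1)).filter
        (fun mn => mn.1 + p * mn.2 = k), b mn) :
    ∀ m n : ℕ, a (m, n) = b (m, n) := by
  set c : ℕ × ℕ → ℂ := fun mn => a mn - b mn with hc
  have hzero : ∀ p : ℕ, p.Prime → 5 ≤ p → ∀ k : ℕ,
      ∑ mn ∈ (Finset.range (k + 1) ×ˢ Finset.range (k + 1)).filter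
        (fun mn => mn.1 + p * mn.2 = k), c mn = 0 := by
    intro p hp hp5 k
    simp only [hc, Finset.sum_sub_distrib, h p hp hp5 k, sub_self]
  have key : ∀ n m, c (m, n) = 0 := by
    intro n
    induction n using Nat.strong_induction_on with
    | _ n IH =>
      intro m
      obtain ⟨p, hple, hp⟩ := Nat.exists_infinite_primes (max (m + 1) 5)
      have hpm : m < p := lt_of_lt_of_le (lt_of_lt_of_le (Nat.lt_succ_self m)
        (le_max_left _ _)) hple
      have hp5 : 5 ≤ p := le_trans (le_max_right _ _) hple
      have hp1 : 1 ≤ p := by omega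
      set k := m + p * n with hk
      have hsum := hzero p hp hp5 k
      have heq : ((Finset.range (k + 1) ×ˢ Finset.range (k + 1)).filter
          (fun mn => mn.1 + p * mn.2 = k))
          = (Finset.range (n + 1)).image (fun j => (m + p * (n - j), j)) := by
        ext ⟨x, y⟩
        simp only [Finset.mem_filter, Finset.mem_product, Finset.mem_range,
          Finset.mem_image, Prod.mk.injEq]
        constructor
        · rintro ⟨⟨hx, hy⟩, hxy⟩
          have hyn : y ≤ n := by
            by_contra hyn
            push_neg at hyn
            have h1 : p * (n + 1) ≤ p * y := Nat.mul_le_mul_left p hyn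
            have h2 : p * (n + 1) = p * n + p := by ring
            omega
          have h3 : p * (n - y) + p * y = p * n := by
            rw [← Nat.mul_add, Nat.sub_add_cancel hyn]
          exact ⟨y, by omega, by omega, rfl⟩
        · rintro ⟨j, hj, hx, hy⟩
          subst hx; subst hy
          have hjn : j ≤ n := by omega
          have h3 : p * (n - j) + p * j = p * n := by
            rw [← Nat.mul_add, Nat.sub_add_cancel hjn]
          have h4 : n ≤ p * n := Nat.le_mul_of_pos_left n (by omega)
          have h5 : p * (n - j) ≤ p * n := Nat.mul_le_mul_left p (Nat.sub_le n j)
          exact ⟨⟨by omega, by omega⟩, by omega⟩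
      rw [heq, Finset.sum_image (by
        intro x hx y hy hxy
        exact (Prod.mk.injEq _ _ _ _).mp hxy |>.2)] at hsum
      rw [Finset.sum_range_succ] at hsum
      have hrest : ∑ j ∈ Finset.range n, c (m + p * (n - j), j) = 0 :=
        Finset.sum_eq_zero fun j hj => IH j (Finset.mem_range.mp hj) _
      rw [hrest, zero_add, Nat.sub_self, Nat.mul_zero, Nat.add_zero] at hsum
      exact hsum
  intro m n
  have := key n m
  simp only [hc] at this
  exact sub_eq_zero.mp this
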